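/- For the quadratic Lie superalgebra g₄,₁ = ℂX₀ ⊕ ℂY₀ ⊕ ℂX₁ ⊕ ℂY₁ with nonzero brackets [Y₁,Y₁] = -2X₀ and [Y₀,Y₁] = -2X₁, the second cohomology group H²(g₄,₁, ℂ) with trivial coefficients is 2-dimensional, spanned by the classes of Y₀* ⊗ X₁* and X₁*Y₁* - 2 X₀* ∧ Y₀*. -/

import Mathlib

/-- A bilinear scalar-valued map, given as a bare function. -/
def IsBilinC {M N : Type*} [AddCommGroup M] [Module ℂ M] [AddCommGroup N] [Module ℂ N]
    (f : M → N → ℂ) : Prop :=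
  (∀ (c : ℂ) (x y : M) (z : N), f (c • x + y) z = c * f x z + f y z) ∧
  (∀ (c : ℂ) (x : M) (y z : N), f x (c • y + z) = c * f x y + f x z)

/-- A linear scalar-valued map, given as a bare function. -/
def IsLinC {M : Type*} [AddCommGroup M] [Module ℂ M] (f : M → ℂ) : Prop :=
  ∀ (c : ℂ) (x y : M), f (c • x + y) = c * f x + f y

/- The elementary quadratic Lie superalgebra `g₄,₁ˢ`: even part `ℂX₀ ⊕ ℂY₀`,
odd part `ℂX₁ ⊕ ℂY₁`, nonzero brackets `[Y₁,Y₁] = -2X₀`, `[Y₀,Y₁] = -2X₁`. -/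

/-- even-even bracket of `g₄,₁` (zero). -/
def br00 : ℂ × ℂ → ℂ × ℂ → ℂ × ℂ := fun _ _ => (0, 0)

/-- even-odd bracket of `g₄,₁`: `[Y₀,Y₁] = -2X₁`. -/
def br01 : ℂ × ℂ → ℂ × ℂ → ℂ × ℂ := fun A U => (-(2 * A.2 * U.2), 0)

/-- odd-odd bracket of `g₄,₁`: `[Y₁,Y₁] = -2X₀` (symmetric). -/
def br11 : ℂ × ℂ → ℂ × ℂ → ℂ × ℂ := fun U V => (-(2 * U.2 * V.2), 0)

/-- A 2-cocycle of `g₄,₁` with trivial coefficients. -/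
def IsCocycle2 (w0 : ℂ × ℂ → ℂ × ℂ → ℂ) (wm : ℂ × ℂ → ℂ × ℂ → ℂ)
    (w1 : ℂ × ℂ → ℂ × ℂ → ℂ) : Prop :=
  IsBilinC w0 ∧ IsBilinC wm ∧ IsBilinC w1 ∧
  (∀ A B, w0 A B = - w0 B A) ∧ (∀ U V, w1 U V = w1 V U) ∧
  (∀ A B C, - w0 (br00 A B) C + w0 (br00 A C) B + w0 A (br00 B C) = 0) ∧
  (∀ A B U, - wm (br00 A B) U - wm B (br01 A U) + wm A (br01 B U) = 0) ∧
  (∀ A U V, - w1 (br01 A U) V - w1 (br01 A V) U + w0 A (br11 U V) = 0) ∧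
  (∀ U V W, wm (br11 U V) W + wm (br11 U W) V + wm (br11 V W) U = 0)

/-- A 2-coboundary of `g₄,₁`. -/
def IsCoboundary2 (w0 : ℂ × ℂ → ℂ × ℂ → ℂ) (wm : ℂ × ℂ → ℂ × ℂ → ℂ)
    (w1 : ℂ × ℂ → ℂ × ℂ → ℂ) : Prop :=
  ∃ (f0 : ℂ × ℂ → ℂ) (f1 : ℂ × ℂ → ℂ), IsLinC f0 ∧ IsLinC f1 ∧
    (∀ A B, w0 A B = - f0 (br00 A B)) ∧
    (∀ A U, wm A U = - f1 (br01 A U)) ∧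
    (∀ U V, w1 U V = - f0 (br11 U V))

/-- The mixed component of the cocycle `Y₀* ⊗ X₁*`. -/
def wAm : ℂ × ℂ → ℂ × ℂ → ℂ := fun A U => A.2 * U.1

/-- The even component of the cocycle `X₁*Y₁* - 2X₀* ∧ Y₀*`. -/
def wB0 : ℂ × ℂ → ℂ × ℂ → ℂ := fun A B => -(2 * (A.1 * B.2 - A.2 * B.1))

/-- The odd component of the cocycle `X₁*Y₁* - 2X₀* ∧ Y₀*`. -/
def wB1 : ℂ × ℂ → ℂ × ℂ → ℂ := fun U V => U.1 * V.2 + U.2 * V.1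

/-!
A cocycle has eight free coordinates in the bases `X₀, Y₀` and `X₁, Y₁` (here `(1,0)` is `X` and
`(0,1)` is `Y`). The cocycle identities evaluated on basis elements kill `ω(X₀, X₁)`, `ω(X₀, Y₁)`
and `ω(X₁, X₁)` and tie `ω(X₀, Y₀)` to `ω(X₁, Y₁)`, which leaves four parameters. The two
coboundaries `δX₀*` and `δX₁*` are multiples of `Y₁*Y₁*` and `Y₀* ⊗ Y₁*` and absorb two of them;
the remaining two are the coefficients of the given classes. Conversely, every coboundary vanishes
on `g₀ ∧ g₀` and on `g₀ ⊗ X₁`, since `g₀` is abelian and `X₁` is central.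
-/

lemma IsLinC.map_zero {M : Type*} [AddCommGroup M] [Module ℂ M] {f : M → ℂ} (hf : IsLinC f) :
    f 0 = 0 := by
  simpa using hf (-1) 0 0

lemma IsLinC.apply_eq {f : ℂ × ℂ → ℂ} (hf : IsLinC f) (A : ℂ × ℂ) :
    f A = A.1 * f (1, 0) + A.2 * f (0, 1) := by
  have h₁ := hf A.1 (1, 0) (0, A.2)
  have h₂ := hf A.2 (0, 1) 0
  simp only [Prod.smul_mk, Prod.mk_add_mk, smul_eq_mul, mul_one, mul_zero, add_zero, zero_add,
    hf.map_zero] at h₁ h₂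
  rw [h₂] at h₁
  exact h₁

lemma isLinC_const_mul_fst (c : ℂ) : IsLinC fun A : ℂ × ℂ => c * A.1 := by
  intro a x y
  simp only [Prod.fst_add, Prod.smul_fst, smul_eq_mul]
  ring

lemma IsBilinC.apply_eq {f : ℂ × ℂ → ℂ × ℂ → ℂ} (hf : IsBilinC f) (A U : ℂ × ℂ) :
    f A U = A.1 * U.1 * f (1, 0) (1, 0) + A.1 * U.2 * f (1, 0) (0, 1)
      + A.2 * U.1 * f (0, 1) (1, 0) + A.2 * U.2 * f (0, 1) (0, 1) := by
  have hleft : IsLinC fun B => f B U := fun c x y => hf.1 c x y U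
  have hright (B : ℂ × ℂ) : IsLinC (f B) := fun c x y => hf.2 c B x y
  rw [hleft.apply_eq A, (hright (1, 0)).apply_eq U, (hright (0, 1)).apply_eq U]
  ring

lemma isCocycle2_wAm : IsCocycle2 (fun _ _ => 0) wAm (fun _ _ => 0) := by
  refine ⟨⟨?_, ?_⟩, ⟨?_, ?_⟩, ⟨?_, ?_⟩, ?_, ?_, ?_, ?_, ?_, ?_⟩ <;>
    intros <;> simp [wAm, br00, br01, br11] <;> ring

lemma isCocycle2_wB : IsCocycle2 wB0 (fun _ _ => 0) wB1 := by
  refine ⟨⟨?_, ?_⟩, ⟨?_, ?_⟩, ⟨?_, ?_⟩, ?_, ?_, ?_, ?_, ?_, ?_⟩ <;>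
    intros <;> simp [wB0, wB1, br00, br01, br11] <;> ring

namespace IsCocycle2

variable {w0 wm w1 : ℂ × ℂ → ℂ × ℂ → ℂ}

lemma even_eq (h : IsCocycle2 w0 wm w1) (A B : ℂ × ℂ) :
    w0 A B = -2 * w1 (1, 0) (0, 1) * (A.1 * B.2 - A.2 * B.1) := by
  obtain ⟨h0, -, h1, hanti, -, -, -, hodd, -⟩ := h
  have hX₀X₀ := hanti (1, 0) (1, 0)
  have hY₀Y₀ := hanti (0, 1) (0, 1)
  have hX₀Y₀ := hanti (1, 0) (0, 1)
  -- `δω(Y₀, Y₁, Y₁) = 0`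
  have hY₀X₀ := hodd (0, 1) (0, 1) (0, 1)
  rw [h1.apply_eq (br01 _ _), h0.apply_eq (0, 1) (br11 _ _)] at hY₀X₀
  simp only [br01, br11] at hY₀X₀
  rw [h0.apply_eq A B]
  linear_combination (A.1 * B.1 / 2) * hX₀X₀ + (A.2 * B.2 / 2) * hY₀Y₀ + A.1 * B.2 * hX₀Y₀
    + ((A.1 * B.2 - A.2 * B.1) / 2) * hY₀X₀

lemma mixed_eq (h : IsCocycle2 w0 wm w1) (A U : ℂ × ℂ) :
    wm A U = A.2 * (wm (0, 1) (1, 0) * U.1 + wm (0, 1) (0, 1) * U.2) := by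
  obtain ⟨-, hm, -, -, -, -, hmixed, -, hodd⟩ := h
  -- `δω(Y₀, X₀, Y₁) = 0`
  have hX₀X₁ := hmixed (0, 1) (1, 0) (0, 1)
  rw [hm.apply_eq (br00 _ _), hm.apply_eq (1, 0) (br01 _ _), hm.apply_eq (0, 1) (br01 _ _)]
    at hX₀X₁
  simp only [br00, br01] at hX₀X₁
  -- `δω(Y₁, Y₁, Y₁) = 0`
  have hX₀Y₁ := hodd (0, 1) (0, 1) (0, 1)
  rw [hm.apply_eq (br11 _ _)] at hX₀Y₁
  simp only [br11] at hX₀Y₁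
  rw [hm.apply_eq A U]
  linear_combination (A.1 * U.1 / 2) * hX₀X₁ - (A.1 * U.2 / 6) * hX₀Y₁

lemma odd_eq (h : IsCocycle2 w0 wm w1) (U V : ℂ × ℂ) :
    w1 U V = w1 (1, 0) (0, 1) * (U.1 * V.2 + U.2 * V.1) + w1 (0, 1) (0, 1) * U.2 * V.2 := by
  obtain ⟨h0, -, h1, -, hsymm, -, -, hodd, -⟩ := h
  -- `δω(Y₀, Y₁, X₁) = 0`
  have hX₁X₁ := hodd (0, 1) (0, 1) (1, 0)
  rw [h1.apply_eq (br01 _ _), h1.apply_eq (br01 _ _) (0, 1), h0.apply_eq (0, 1) (br11 _ _)]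
    at hX₁X₁
  simp only [br01, br11] at hX₁X₁
  rw [h1.apply_eq U V]
  linear_combination (U.1 * V.1 / 2) * hX₁X₁ + U.2 * V.1 * hsymm (0, 1) (1, 0)

theorem exists_cohomologous (h : IsCocycle2 w0 wm w1) : ∃ a b : ℂ,
    IsCoboundary2 (fun A B => w0 A B - b * wB0 A B) (fun A U => wm A U - a * wAm A U)
      (fun U V => w1 U V - b * wB1 U V) := by
  refine ⟨wm (0, 1) (1, 0), w1 (1, 0) (0, 1), fun A => w1 (0, 1) (0, 1) / 2 * A.1,
    fun U => wm (0, 1) (0, 1) / 2 * U.1, isLinC_const_mul_fst _, isLinC_const_mul_fst _,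
    fun A B => ?_, fun A U => ?_, fun U V => ?_⟩
  · simp only [h.even_eq A B, wB0, br00]
    ring
  · simp only [h.mixed_eq A U, wAm, br01]
    ring
  · simp only [h.odd_eq U V, wB1, br11]
    ring

end IsCocycle2

namespace IsCoboundary2

variable {w0 wm w1 : ℂ × ℂ → ℂ × ℂ → ℂ}

lemma even_eq_zero (h : IsCoboundary2 w0 wm w1) (A B : ℂ × ℂ) : w0 A B = 0 := by
  obtain ⟨f0, -, hf0, -, hw0, -, -⟩ := h
  rw [hw0, br00, Prod.mk_zero_zero, hf0.map_zero, neg_zero]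

lemma mixed_apply_X₁_eq_zero (h : IsCoboundary2 w0 wm w1) (A : ℂ × ℂ) : wm A (1, 0) = 0 := by
  obtain ⟨-, f1, -, hf1, -, hwm, -⟩ := h
  rw [hwm, br01, mul_zero, neg_zero, Prod.mk_zero_zero, hf1.map_zero, neg_zero]

end IsCoboundary2

/-- `H²(g₄,₁ˢ, ℂ)` is two-dimensional, spanned by the classes of `Y₀* ⊗ X₁*` and of
`X₁*Y₁* - 2X₀* ∧ Y₀*`: both are cocycles, every cocycle is a linear combination of them
modulo coboundaries, and no nontrivial linear combination of them is a coboundary. -/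
theorem second_cohomology_g41 :
    IsCocycle2 (fun _ _ => 0) wAm (fun _ _ => 0) ∧
    IsCocycle2 wB0 (fun _ _ => 0) wB1 ∧
    (∀ w0 wm w1, IsCocycle2 w0 wm w1 → ∃ a b : ℂ,
      IsCoboundary2 (fun A B => w0 A B - b * wB0 A B)
        (fun A U => wm A U - a * wAm A U)
        (fun U V => w1 U V - b * wB1 U V)) ∧
    (∀ a b : ℂ,
      IsCoboundary2 (fun A B => b * wB0 A B) (fun A U => a * wAm A U)
        (fun U V => b * wB1 U V) → a = 0 ∧ b = 0) := by
  refine ⟨isCocycle2_wAm, isCocycle2_wB, fun _ _ _ h => h.exists_cohomologous, fun a b h => ?_⟩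
  have ha : a * wAm (0, 1) (1, 0) = 0 := h.mixed_apply_X₁_eq_zero (0, 1)
  have hb : b * wB0 (1, 0) (0, 1) = 0 := h.even_eq_zero (1, 0) (0, 1)
  simp only [wAm, wB0] at ha hb
  exact ⟨by linear_combination ha, by linear_combination -hb / 2⟩
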